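/- Let r and q be real numbers with r ∉ {0,1} and q ≠ 0, and let F_{r,q}(x) = ((cosh(rx))^{q/r} − 1) / ((cosh x)^q − 1) for x > 0. If (r,q) belongs to {(u,v) : u < 0, v ≤ min(0, (2/3)(u+1))} \ {(−1,0)}, or {(u,v) : 0 < u < 1, v ≥ max(2u, (2/3)(u+1))} \ {(1/2,1)}, or {(u,v) : 1 < u, v ≤ min(2, (2/3)(u+1))} \ {(2,2)}, then F_{r,q} is strictly decreasing on (0,+∞). -/

import Mathlib

/-!
Write `F_{r,q} = φ_r / φ_1` with `φ_r x = ((cosh (r x))^{q/r} - 1) / q`, so that `φ_r 0 = 0`.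
By the monotone form of l'Hôpital's rule it suffices that `φ_r' / φ_1'` is strictly decreasing,
and the derivative of this ratio has the sign of `ψ (2x)`, where
`ψ t = q sinh ((1 - r) t) + (2 r - q) sinh t + (q - 2) sinh (r t)`.
The Taylor coefficients of `ψ` are affine in `q`; on the parameter region they are all `≤ 0`,
and the third or the fifth one is `< 0`, so `ψ < 0` on `(0, ∞)`.
-/

/-- The function `F_{r,q}` defined on `(0,+∞)`. -/
noncomputable def Frq (r q : ℝ) (x : ℝ) : ℝ :=
  ((Real.cosh (r * x)) ^ (q / r) - 1) / ((Real.cosh x) ^ q - 1)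

open Real Set

theorem strictAntiOn_div_of_deriv_div {f g f' g' : ℝ → ℝ} {a : ℝ}
    (hfc : ContinuousOn f (Ici a)) (hgc : ContinuousOn g (Ici a))
    (hf : ∀ x ∈ Ioi a, HasDerivAt f (f' x) x) (hg : ∀ x ∈ Ioi a, HasDerivAt g (g' x) x)
    (hfa : f a = 0) (hga : g a = 0) (hg' : ∀ x ∈ Ioi a, 0 < g' x)
    (hanti : StrictAntiOn (fun x => f' x / g' x) (Ioi a)) :
    StrictAntiOn (fun x => f x / g x) (Ioi a) := by
  have hg_pos : ∀ x ∈ Ioi a, 0 < g x := by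
    have hmono : StrictMonoOn g (Ici a) :=
      strictMonoOn_of_hasDerivWithinAt_pos (convex_Ici a) hgc
        (fun x hx => (hg x (by simpa using hx)).hasDerivWithinAt)
        (fun x hx => hg' x (by simpa using hx))
    intro x hx
    simpa [hga] using hmono self_mem_Ici (mem_Ici_of_Ioi hx) hx
  -- Cauchy's mean value theorem on `[a, x]` writes `f x / g x` as `f' c / g' c` with `c < x`.
  have hlt : ∀ x ∈ Ioi a, f' x / g' x < f x / g x := by
    intro x hx
    obtain ⟨c, hc, hcx⟩ := exists_ratio_hasDerivAt_eq_ratio_slope f f' hx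
      (hfc.mono Icc_subset_Ici_self) (fun y hy => hf y hy.1)
      g g' (hgc.mono Icc_subset_Ici_self) (fun y hy => hg y hy.1)
    rw [hfa, hga, sub_zero, sub_zero] at hcx
    calc f' x / g' x < f' c / g' c := hanti hc.1 hx hc.2
      _ = f x / g x := by
        rw [div_eq_div_iff (hg' c hc.1).ne' (hg_pos x hx).ne']; linarith
  have hderiv : ∀ x ∈ Ioi a,
      HasDerivAt (fun x => f x / g x) ((f' x * g x - f x * g' x) / g x ^ 2) x :=
    fun x hx => (hf x hx).div (hg x hx) (hg_pos x hx).ne'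
  refine strictAntiOn_of_hasDerivWithinAt_neg (convex_Ioi a)
    (fun x hx => (hderiv x hx).continuousAt.continuousWithinAt)
    (fun x hx => (hderiv x (by simpa using hx)).hasDerivWithinAt) (fun x hx => ?_)
  rw [interior_Ioi] at hx
  have := hlt x hx
  rw [div_lt_div_iff₀ (hg' x hx) (hg_pos x hx)] at this
  exact div_neg_of_neg_of_pos (by linarith) (pow_pos (hg_pos x hx) 2)

lemma mul_pow_sub_pow_nonneg {P a b : ℝ} (ha : 0 ≤ a) (hb : 0 ≤ b) (h : 0 ≤ P * (a - b))
    (k : ℕ) : 0 ≤ P * (a ^ k - b ^ k) := by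
  rcases lt_trichotomy a b with hab | rfl | hab
  · have hP : P ≤ 0 := nonpos_of_mul_nonneg_left h (by linarith)
    exact mul_nonneg_of_nonpos_of_nonpos hP (by linarith [pow_le_pow_left₀ ha hab.le k])
  · simp
  · have hP : 0 ≤ P := nonneg_of_mul_nonneg_left h (by linarith)
    exact mul_nonneg hP (by linarith [pow_le_pow_left₀ hb hab.le k])

lemma rpow_sub_one_eq_rpow_sub_two_mul {c : ℝ} (hc : c ≠ 0) (p : ℝ) :
    c ^ (p - 1) = c ^ (p - 2) * c := by
  rw [← rpow_add_one hc]; ring_nf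

namespace Frq

def Region (r q : ℝ) : Prop :=
  (r < 0 ∧ q ≤ min 0 (2 / 3 * (r + 1)) ∧ ¬(r = -1 ∧ q = 0)) ∨
  (0 < r ∧ r < 1 ∧ max (2 * r) (2 / 3 * (r + 1)) ≤ q ∧ ¬(r = 1 / 2 ∧ q = 1)) ∨
  (1 < r ∧ q ≤ min 2 (2 / 3 * (r + 1)) ∧ ¬(r = 2 ∧ q = 2))

noncomputable def psi (r q t : ℝ) : ℝ :=
  q * sinh ((1 - r) * t) + (2 * r - q) * sinh t + (q - 2) * sinh (r * t)

noncomputable def psiCoeff (r q : ℝ) (n : ℕ) : ℝ :=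
  q * ((1 - r) ^ n + r ^ n - 1) + 2 * (r - r ^ n)

noncomputable def dPoly (r : ℝ) (n : ℕ) : ℝ :=
  (1 - 2 * r) - (1 + r) * (1 - r) ^ n + (2 - r) * r ^ n

variable {r q q' : ℝ}

lemma hasSum_psi (r q t : ℝ) :
    HasSum (fun k : ℕ => psiCoeff r q (2 * k + 1) * (t ^ (2 * k + 1) / (2 * k + 1).factorial))
      (psi r q t) := by
  have := (((hasSum_sinh ((1 - r) * t)).mul_left q).add
    ((hasSum_sinh t).mul_left (2 * r - q))).add ((hasSum_sinh (r * t)).mul_left (q - 2))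
  refine this.congr_fun fun k => ?_
  simp only [psiCoeff, mul_pow]
  ring

lemma psiCoeff_le_psiCoeff {n : ℕ} (h : (q - q') * ((1 - r) ^ n + r ^ n - 1) ≤ 0) :
    psiCoeff r q n ≤ psiCoeff r q' n := by
  unfold psiCoeff; linarith

lemma psiCoeff_two_thirds (r : ℝ) (n : ℕ) :
    psiCoeff r (2 / 3 * (r + 1)) n = -(2 / 3) * dPoly r n := by
  unfold psiCoeff dPoly; ring

lemma psiCoeff_three (r q : ℝ) :
    psiCoeff r q 3 = 3 * (r * (1 - r)) * (2 / 3 * (r + 1) - q) := by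
  unfold psiCoeff; ring

lemma dPoly_five (r : ℝ) : dPoly r 5 = r * (1 - r) * (1 + r) * (2 - r) * (1 - 2 * r) := by
  unfold dPoly; ring

lemma dPoly_five_nonneg (h : r ≤ -1 ∨ 0 ≤ r ∧ r ≤ 1 / 2 ∨ 1 ≤ r ∧ r ≤ 2) :
    0 ≤ dPoly r 5 := by
  rw [dPoly_five]
  rcases h with h | ⟨h₀, h₁⟩ | ⟨h₁, h₂⟩
  · rw [show r * (1 - r) * (1 + r) * (2 - r) * (1 - 2 * r)
        = -r * (1 - r) * -(1 + r) * (2 - r) * (1 - 2 * r) by ring]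
    apply_rules [mul_nonneg] <;> linarith
  · apply_rules [mul_nonneg] <;> linarith
  · rw [show r * (1 - r) * (1 + r) * (2 - r) * (1 - 2 * r)
        = r * (r - 1) * (1 + r) * (2 - r) * (2 * r - 1) by ring]
    apply_rules [mul_nonneg] <;> linarith

lemma dPoly_five_pos (h : r < -1 ∨ 0 < r ∧ r < 1 / 2 ∨ 1 < r ∧ r < 2) : 0 < dPoly r 5 := by
  rw [dPoly_five]
  rcases h with h | ⟨h₀, h₁⟩ | ⟨h₁, h₂⟩
  · rw [show r * (1 - r) * (1 + r) * (2 - r) * (1 - 2 * r)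
        = -r * (1 - r) * -(1 + r) * (2 - r) * (1 - 2 * r) by ring]
    apply_rules [mul_pos] <;> linarith
  · apply_rules [mul_pos] <;> linarith
  · rw [show r * (1 - r) * (1 + r) * (2 - r) * (1 - 2 * r)
        = r * (r - 1) * (1 + r) * (2 - r) * (2 * r - 1) by ring]
    apply_rules [mul_pos] <;> linarith

lemma dPoly_odd_nonneg (h : 0 ≤ dPoly r 5) (k : ℕ) : 0 ≤ dPoly r (2 * k + 1) := by
  rw [show dPoly r 5 = r * (1 - r) * (1 + r) * (2 - r) * ((1 - r) ^ 2 - r ^ 2) by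
    rw [dPoly_five]; ring] at h
  induction k with
  | zero => exact le_of_eq (by unfold dPoly; ring)
  | succ k ih =>
    have hstep : dPoly r (2 * (k + 1) + 1) = dPoly r (2 * k + 1)
        + r * (1 - r) * (1 + r) * (2 - r) * (((1 - r) ^ 2) ^ k - (r ^ 2) ^ k) := by
      simp only [dPoly, ← pow_mul]; ring
    linarith [mul_pow_sub_pow_nonneg (sq_nonneg (1 - r)) (sq_nonneg r) h k]

lemma one_sub_pow_add_pow_sub_one_nonneg (hr : r ≤ 0 ∨ 1 ≤ r) (k : ℕ) :
    0 ≤ (1 - r) ^ (2 * k + 1) + r ^ (2 * k + 1) - 1 := by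
  have hodd : Odd (2 * k + 1) := odd_two_mul_add_one k
  rcases hr with hr | hr
  · have := pow_add_pow_le zero_le_one (neg_nonneg.2 hr) (n := 2 * k + 1) (by omega)
    rw [one_pow, hodd.neg_pow, ← sub_eq_add_neg (1 : ℝ) r] at this
    linarith
  · have := pow_add_pow_le zero_le_one (sub_nonneg.2 hr) (n := 2 * k + 1) (by omega)
    rw [one_pow, add_sub_cancel] at this
    rw [show 1 - r = -(r - 1) by ring, hodd.neg_pow]
    linarith

lemma one_sub_pow_add_pow_sub_one_nonpos (h₀ : 0 ≤ r) (h₁ : r ≤ 1) {n : ℕ}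
    (hn : n ≠ 0) :
    (1 - r) ^ n + r ^ n - 1 ≤ 0 := by
  linarith [pow_le_of_le_one (sub_nonneg.2 h₁) (by linarith) hn, pow_le_of_le_one h₀ h₁ hn]

lemma psiCoeff_odd_nonpos_of_dPoly (hd : 0 ≤ dPoly r 5) {k : ℕ}
    (h : (q - 2 / 3 * (r + 1)) * ((1 - r) ^ (2 * k + 1) + r ^ (2 * k + 1) - 1) ≤ 0) :
    psiCoeff r q (2 * k + 1) ≤ 0 := by
  refine (psiCoeff_le_psiCoeff h).trans ?_
  rw [psiCoeff_two_thirds]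
  linarith [dPoly_odd_nonneg hd k]

/-- `psiCoeff r q n` is affine in `q`; in each case it is bounded by its value at whichever of
`2 (r + 1) / 3`, `0`, `2 r`, `2` is the binding constraint on `q`. -/
lemma psiCoeff_odd_nonpos (h : Region r q) (k : ℕ) : psiCoeff r q (2 * k + 1) ≤ 0 := by
  have hodd : Odd (2 * k + 1) := odd_two_mul_add_one k
  rcases h with ⟨hr, hq, -⟩ | ⟨hr₀, hr₁, hq, -⟩ | ⟨hr, hq, -⟩
  · rw [le_min_iff] at hq
    have hB := one_sub_pow_add_pow_sub_one_nonneg (Or.inl hr.le) k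
    rcases le_total r (-1) with hr' | hr'
    · exact psiCoeff_odd_nonpos_of_dPoly (dPoly_five_nonneg (Or.inl hr'))
        (mul_nonpos_of_nonpos_of_nonneg (by linarith) hB)
    · refine (psiCoeff_le_psiCoeff (q' := 0)
        (mul_nonpos_of_nonpos_of_nonneg (by linarith) hB)).trans ?_
      have := pow_le_of_le_one (neg_nonneg.2 hr.le) (by linarith) (n := 2 * k + 1) (by omega)
      rw [hodd.neg_pow] at this
      simp only [psiCoeff]
      linarith
  · rw [max_le_iff] at hq
    have hB := one_sub_pow_add_pow_sub_one_nonpos hr₀.le hr₁.le (n := 2 * k + 1) (by omega)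
    rcases le_total r (1 / 2) with hr' | hr'
    · exact psiCoeff_odd_nonpos_of_dPoly (dPoly_five_nonneg (Or.inr (Or.inl ⟨hr₀.le, hr'⟩)))
        (mul_nonpos_of_nonneg_of_nonpos (by linarith) hB)
    · refine (psiCoeff_le_psiCoeff (q' := 2 * r)
        (mul_nonpos_of_nonneg_of_nonpos (by linarith) hB)).trans ?_
      have hpow : (1 - r) ^ (2 * k) ≤ r ^ (2 * k) :=
        pow_le_pow_left₀ (by linarith) (by linarith) _
      rw [show psiCoeff r (2 * r) (2 * k + 1)
          = -(2 * (r * (1 - r)) * (r ^ (2 * k) - (1 - r) ^ (2 * k))) by unfold psiCoeff; ring,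
        neg_nonpos]
      exact mul_nonneg (by nlinarith) (by linarith)
  · rw [le_min_iff] at hq
    have hB := one_sub_pow_add_pow_sub_one_nonneg (Or.inr hr.le) k
    rcases le_total r 2 with hr' | hr'
    · exact psiCoeff_odd_nonpos_of_dPoly (dPoly_five_nonneg (Or.inr (Or.inr ⟨hr.le, hr'⟩)))
        (mul_nonpos_of_nonpos_of_nonneg (by linarith) hB)
    · refine (psiCoeff_le_psiCoeff (q' := 2)
        (mul_nonpos_of_nonpos_of_nonneg (by linarith) hB)).trans ?_
      have := le_self_pow₀ (by linarith : (1 : ℝ) ≤ r - 1) (n := 2 * k + 1) (by omega)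
      simp only [psiCoeff, show 1 - r = -(r - 1) by ring, hodd.neg_pow]
      linarith

/-- `psiCoeff r q 3` vanishes only on the line `q = 2 (r + 1) / 3`, and on that line
`psiCoeff r q 5` vanishes only at the excluded points of the region. -/
lemma exists_psiCoeff_neg (h : Region r q) : ∃ k : ℕ, psiCoeff r q (2 * k + 1) < 0 := by
  by_cases hq : q = 2 / 3 * (r + 1)
  · refine ⟨2, ?_⟩
    show psiCoeff r q 5 < 0
    subst hq
    rw [psiCoeff_two_thirds]
    suffices 0 < dPoly r 5 by linarith
    refine dPoly_five_pos ?_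
    rcases h with ⟨-, hq, hex⟩ | ⟨hr₀, -, hq, hex⟩ | ⟨hr, hq, hex⟩
    · refine Or.inl (lt_of_le_of_ne ?_ fun h => hex ⟨h, by rw [h]; norm_num⟩)
      linarith [min_le_left 0 (2 / 3 * (r + 1))]
    · refine Or.inr (Or.inl ⟨hr₀,
        lt_of_le_of_ne ?_ fun h => hex ⟨h, by rw [h]; norm_num⟩⟩)
      linarith [le_max_left (2 * r) (2 / 3 * (r + 1))]
    · refine Or.inr (Or.inr ⟨hr, lt_of_le_of_ne ?_ fun h => hex ⟨h, by rw [h]; norm_num⟩⟩)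
      linarith [min_le_left 2 (2 / 3 * (r + 1))]
  · refine ⟨1, ?_⟩
    show psiCoeff r q 3 < 0
    rw [psiCoeff_three]
    rcases h with ⟨hr, hq', -⟩ | ⟨hr₀, hr₁, hq', -⟩ | ⟨hr, hq', -⟩
    · have : q < 2 / 3 * (r + 1) := lt_of_le_of_ne (hq'.trans (min_le_right _ _)) hq
      exact mul_neg_of_neg_of_pos (by nlinarith) (by linarith)
    · have : 2 / 3 * (r + 1) < q := lt_of_le_of_ne ((le_max_right _ _).trans hq') (Ne.symm hq)
      exact mul_neg_of_pos_of_neg (by nlinarith) (by linarith)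
    · have : q < 2 / 3 * (r + 1) := lt_of_le_of_ne (hq'.trans (min_le_right _ _)) hq
      exact mul_neg_of_neg_of_pos (by nlinarith) (by linarith)

lemma psi_neg (h : Region r q) {t : ℝ} (ht : 0 < t) : psi r q t < 0 := by
  obtain ⟨k, hk⟩ := exists_psiCoeff_neg h
  refine hasSum_lt (i := k) (fun n => ?_) ?_ (hasSum_psi r q t) hasSum_zero
  · exact mul_nonpos_of_nonpos_of_nonneg (psiCoeff_odd_nonpos h n) (by positivity)
  · exact mul_neg_of_neg_of_pos hk (by positivity)

lemma psi_two_mul (r q x : ℝ) :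
    psi r q (2 * x) = 4 * (((q - r) * sinh (r * x) ^ 2 + r * cosh (r * x) ^ 2) * (cosh x * sinh x)
      - cosh (r * x) * sinh (r * x) * ((q - 1) * sinh x ^ 2 + cosh x ^ 2)) := by
  rw [psi, show (1 - r) * (2 * x) = 2 * x - 2 * (r * x) by ring,
    show r * (2 * x) = 2 * (r * x) by ring, sinh_sub, sinh_two_mul, cosh_two_mul,
    sinh_two_mul, cosh_two_mul, cosh_sq x, cosh_sq (r * x)]
  ring

noncomputable def phi (r q x : ℝ) : ℝ := (cosh (r * x) ^ (q / r) - 1) / q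

noncomputable def phiDeriv (r q x : ℝ) : ℝ := cosh (r * x) ^ (q / r - 1) * sinh (r * x)

lemma phi_zero (r q : ℝ) : phi r q 0 = 0 := by simp [phi]

lemma Frq_eq_phi_div_phi (hq : q ≠ 0) : Frq r q = fun x => phi r q x / phi 1 q x := by
  ext x
  simp only [Frq, phi, one_mul, div_one, div_div_div_cancel_right₀ hq]

lemma hasDerivAt_phi (hr : r ≠ 0) (hq : q ≠ 0) (x : ℝ) :
    HasDerivAt (phi r q) (phiDeriv r q x) x := by
  have := (((hasDerivAt_id x).const_mul r).cosh.rpow_const (p := q / r)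
    (Or.inl (cosh_pos _).ne')).sub_const 1 |>.div_const q
  refine this.congr_deriv ?_
  simp only [phiDeriv, id]
  field_simp

lemma hasDerivAt_phiDeriv (hr : r ≠ 0) (x : ℝ) :
    HasDerivAt (phiDeriv r q)
      (cosh (r * x) ^ (q / r - 2) * ((q - r) * sinh (r * x) ^ 2 + r * cosh (r * x) ^ 2)) x := by
  have hrx := (hasDerivAt_id x).const_mul r
  have := (hrx.cosh.rpow_const (p := q / r - 1) (Or.inl (cosh_pos _).ne')).mul hrx.sinh
  refine this.congr_deriv ?_
  rw [show q / r - 1 - 1 = q / r - 2 by ring, rpow_sub_one_eq_rpow_sub_two_mul (cosh_pos _).ne']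
  simp only [id]
  field_simp

lemma phiDeriv_one_pos {x : ℝ} (hx : 0 < x) : 0 < phiDeriv 1 q x :=
  mul_pos (rpow_pos_of_pos (cosh_pos _) _) (sinh_pos_iff.2 (by simpa using hx))

lemma hasDerivAt_phiDeriv_div (hr : r ≠ 0) {x : ℝ} (hx : 0 < x) :
    HasDerivAt (fun y => phiDeriv r q y / phiDeriv 1 q y)
      (cosh (r * x) ^ (q / r - 2) * cosh x ^ (q - 2) * psi r q (2 * x)
        / (4 * phiDeriv 1 q x ^ 2)) x := by
  refine ((hasDerivAt_phiDeriv hr x).div (hasDerivAt_phiDeriv one_ne_zero x)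
    (phiDeriv_one_pos hx).ne').congr_deriv ?_
  have hD := phiDeriv_one_pos (q := q) hx
  simp only [phiDeriv, one_mul, div_one] at hD ⊢
  rw [psi_two_mul, rpow_sub_one_eq_rpow_sub_two_mul (cosh_pos _).ne',
    rpow_sub_one_eq_rpow_sub_two_mul (cosh_pos _).ne']
  field_simp

lemma strictAntiOn_phiDeriv_div (hr : r ≠ 0) (h : Region r q) :
    StrictAntiOn (fun x => phiDeriv r q x / phiDeriv 1 q x) (Ioi 0) := by
  refine strictAntiOn_of_hasDerivWithinAt_neg (convex_Ioi 0)
    (fun x hx => (hasDerivAt_phiDeriv_div hr hx).continuousAt.continuousWithinAt)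
    (fun x hx => (hasDerivAt_phiDeriv_div hr (by simpa using hx)).hasDerivWithinAt)
    (fun x hx => ?_)
  have hx : 0 < x := by simpa using hx
  have hD := phiDeriv_one_pos (q := q) hx
  exact div_neg_of_neg_of_pos
    (mul_neg_of_pos_of_neg (by positivity) (psi_neg h (by positivity))) (by positivity)

end Frq

open Frq

theorem Frq_strictAntiOn (r q : ℝ) (hr0 : r ≠ 0) (hq : q ≠ 0)
    (h : (r < 0 ∧ q ≤ min 0 (2 / 3 * (r + 1)) ∧ ¬(r = -1 ∧ q = 0)) ∨
         (0 < r ∧ r < 1 ∧ max (2 * r) (2 / 3 * (r + 1)) ≤ q ∧ ¬(r = 1 / 2 ∧ q = 1)) ∨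
         (1 < r ∧ q ≤ min 2 (2 / 3 * (r + 1)) ∧ ¬(r = 2 ∧ q = 2))) :
    StrictAntiOn (Frq r q) (Set.Ioi 0) := by
  rw [Frq_eq_phi_div_phi hq]
  exact strictAntiOn_div_of_deriv_div
    (fun x _ => (hasDerivAt_phi hr0 hq x).continuousAt.continuousWithinAt)
    (fun x _ => (hasDerivAt_phi one_ne_zero hq x).continuousAt.continuousWithinAt)
    (fun x _ => hasDerivAt_phi hr0 hq x) (fun x _ => hasDerivAt_phi one_ne_zero hq x)
    (phi_zero r q) (phi_zero 1 q) (fun x hx => phiDeriv_one_pos hx)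
    (strictAntiOn_phiDeriv_div hr0 h)
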